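/- (Blindness of score matching to isolated components in the model.) Fix μ₁ < μ₂ ∈ ℝ and π ∈ (0,1). Let q_σ(x) = φ_{μ₁,σ}(x) and p_σ(x) = π φ_{μ₁,σ}(x) + (1−π) φ_{μ₂,σ}(x). Then the Fisher divergence J(q_σ ‖ p_σ) → 0 as σ → 0⁺, regardless of the mixing proportion π. -/

import Mathlib

/-!
The score gap `s_q - s_p` is `(1 - w) φ₂ / p` times the constant gap `(μ₁ - μ₂) / σ²` between
the two Gaussian scores, so the Fisher integrand is at most a constant times
`σ⁻⁴ √(φ₁ φ₂)` (AM-GM on `p = w φ₁ + (1 - w) φ₂`). Completing the square,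
`√(φ₁ φ₂) = exp (-(μ₂ - μ₁)² / (8σ²)) φ_{(μ₁+μ₂)/2}`, whose integral is exponentially small
and beats the polynomial factor `σ⁻⁴` as `σ → 0⁺`.
-/

open MeasureTheory Filter

/-- Gaussian density with mean `μ` and standard deviation `σ`. -/
noncomputable def gaussian (μ σ : ℝ) (x : ℝ) : ℝ :=
  (σ * Real.sqrt (2 * Real.pi))⁻¹ * Real.exp (-(x - μ) ^ 2 / (2 * σ ^ 2))

/-- The score of a density `ρ`: the derivative of its log. -/
noncomputable def score (ρ : ℝ → ℝ) (x : ℝ) : ℝ :=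
  deriv (fun y => Real.log (ρ y)) x

/-- Fisher divergence between densities `q` and `p`. -/
noncomputable def fisherDiv (q p : ℝ → ℝ) : ℝ :=
  ∫ x : ℝ, q x * (score q x - score p x) ^ 2

open Topology Real ProbabilityTheory

lemma score_eq_of_hasDerivAt {ρ : ℝ → ℝ} {ρ' x : ℝ} (h : HasDerivAt ρ ρ' x) (hρ : ρ x ≠ 0) :
    score ρ x = ρ' / ρ x :=
  (h.log hρ).deriv

lemma score_sub_score_mixture {f g : ℝ → ℝ} {f' g' a b x : ℝ} (hf : HasDerivAt f f' x)
    (hg : HasDerivAt g g' x) (hf0 : f x ≠ 0) (hg0 : g x ≠ 0) (hp : a * f x + b * g x ≠ 0) :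
    score f x - score (fun y => a * f y + b * g y) x =
      b * g x * (score f x - score g x) / (a * f x + b * g x) := by
  rw [score_eq_of_hasDerivAt hf hf0, score_eq_of_hasDerivAt hg hg0,
    score_eq_of_hasDerivAt ((hf.const_mul a).fun_add (hg.const_mul b)) hp, eq_div_iff hp,
    sub_mul, div_mul_cancel₀ _ hp]
  field_simp
  ring

lemma fisherDiv_nonneg {q : ℝ → ℝ} (p : ℝ → ℝ) (hq : ∀ x, 0 ≤ q x) : 0 ≤ fisherDiv q p :=
  integral_nonneg fun x => mul_nonneg (hq x) (sq_nonneg _)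

lemma mul_sq_div_add_le_sqrt_mul {a b : ℝ} (ha : 0 ≤ a) (hb : 0 ≤ b) :
    a * (b / (a + b)) ^ 2 ≤ √(a * b) / 2 := by
  rcases (add_nonneg ha hb).eq_or_lt with hab | hab
  · rw [← hab, div_zero, zero_pow two_ne_zero, mul_zero]
    positivity
  have hamgm : 2 * √(a * b) ≤ a + b := by
    rw [sqrt_mul ha]
    nlinarith [sq_nonneg (√a - √b), sq_sqrt ha, sq_sqrt hb]
  calc a * (b / (a + b)) ^ 2 = a * b / (a + b) * (b / (a + b)) := by ring
    _ ≤ a * b / (a + b) :=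
        mul_le_of_le_one_right (by positivity) (div_le_one_of_le₀ (le_add_of_nonneg_left ha) hab.le)
    _ = √(a * b) * (√(a * b) / (a + b)) := by
        rw [← mul_div_assoc, mul_self_sqrt (mul_nonneg ha hb)]
    _ ≤ √(a * b) * (1 / 2) :=
        mul_le_mul_of_nonneg_left (by rw [div_le_iff₀ hab]; linarith) (sqrt_nonneg _)
    _ = √(a * b) / 2 := by ring

section Gaussian

variable {σ : ℝ}

lemma gaussian_pos (m x : ℝ) (hσ : 0 < σ) : 0 < gaussian m σ x := by
  unfold gaussian
  positivity

lemma hasDerivAt_gaussian (m x : ℝ) :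
    HasDerivAt (gaussian m σ) (gaussian m σ x * ((m - x) / σ ^ 2)) x := by
  have hexp : HasDerivAt (fun y : ℝ => -(y - m) ^ 2 / (2 * σ ^ 2)) ((m - x) / σ ^ 2) x := by
    have hsq : HasDerivAt (fun y : ℝ => (y - m) ^ 2) (2 * (x - m)) x := by
      simpa using ((hasDerivAt_id x).sub_const m).fun_pow 2
    refine (hsq.neg.div_const (2 * σ ^ 2)).congr_deriv ?_
    ring
  refine (hexp.exp.const_mul (σ * √(2 * π))⁻¹).congr_deriv ?_
  rw [gaussian]
  ring

lemma score_gaussian (m x : ℝ) (hσ : 0 < σ) : score (gaussian m σ) x = (m - x) / σ ^ 2 := by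
  rw [score_eq_of_hasDerivAt (hasDerivAt_gaussian m x) (gaussian_pos m x hσ).ne',
    mul_div_cancel_left₀ _ (gaussian_pos m x hσ).ne']

lemma gaussian_eq_gaussianPDFReal (m : ℝ) (hσ : 0 < σ) :
    gaussian m σ = gaussianPDFReal m (σ ^ 2).toNNReal := by
  ext x
  rw [gaussian, gaussianPDFReal_def, coe_toNNReal _ (sq_nonneg σ), sqrt_mul' _ (sq_nonneg σ),
    sqrt_sq hσ.le, mul_comm σ]

lemma integrable_gaussian (m : ℝ) (hσ : 0 < σ) : Integrable (gaussian m σ) := by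
  rw [gaussian_eq_gaussianPDFReal m hσ]
  exact integrable_gaussianPDFReal m _

lemma integral_gaussian_eq_one (m : ℝ) (hσ : 0 < σ) : ∫ x, gaussian m σ x = 1 := by
  rw [gaussian_eq_gaussianPDFReal m hσ]
  refine integral_gaussianPDFReal_eq_one m fun h => ?_
  exact (pow_pos hσ 2).not_ge (toNNReal_eq_zero.1 h)

lemma sqrt_gaussian_mul_gaussian (μ₁ μ₂ x : ℝ) (hσ : 0 < σ) :
    √(gaussian μ₁ σ x * gaussian μ₂ σ x) =
      exp (-(μ₂ - μ₁) ^ 2 / (8 * σ ^ 2)) * gaussian ((μ₁ + μ₂) / 2) σ x := by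
  have hsq : gaussian μ₁ σ x * gaussian μ₂ σ x =
      (exp (-(μ₂ - μ₁) ^ 2 / (8 * σ ^ 2)) * gaussian ((μ₁ + μ₂) / 2) σ x) ^ 2 := by
    unfold gaussian
    rw [mul_mul_mul_comm, ← exp_add, mul_pow, mul_pow, ← exp_nat_mul, ← exp_nat_mul,
      mul_left_comm, ← exp_add]
    congr 1
    · ring
    · congr 1
      push_cast
      field_simp
      ring
  rw [hsq, sqrt_sq (mul_nonneg (exp_nonneg _) (gaussian_pos _ x hσ).le)]

end Gaussian

section Mixture

variable {μ₁ μ₂ w σ : ℝ}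

lemma gaussian_mul_sq_score_sub_mixture_le (x : ℝ) (hσ : 0 < σ) (hw0 : 0 < w) (hw1 : w ≤ 1) :
    gaussian μ₁ σ x *
        (score (gaussian μ₁ σ) x -
          score (fun y => w * gaussian μ₁ σ y + (1 - w) * gaussian μ₂ σ y) x) ^ 2 ≤
      (μ₁ - μ₂) ^ 2 * √(w * (1 - w)) / (2 * w) / σ ^ 4 *
        exp (-(μ₂ - μ₁) ^ 2 / (8 * σ ^ 2)) * gaussian ((μ₁ + μ₂) / 2) σ x := by
  have hsqrt : √(w * gaussian μ₁ σ x * ((1 - w) * gaussian μ₂ σ x)) =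
      √(w * (1 - w)) * √(gaussian μ₁ σ x * gaussian μ₂ σ x) := by
    rw [← sqrt_mul (mul_nonneg hw0.le (sub_nonneg.2 hw1))]
    ring_nf
  set a := w * gaussian μ₁ σ x
  set b := (1 - w) * gaussian μ₂ σ x
  have ha : 0 < a := mul_pos hw0 (gaussian_pos μ₁ x hσ)
  have hb : 0 ≤ b := mul_nonneg (sub_nonneg.2 hw1) (gaussian_pos μ₂ x hσ).le
  rw [score_sub_score_mixture (hasDerivAt_gaussian μ₁ x) (hasDerivAt_gaussian μ₂ x)
      (gaussian_pos μ₁ x hσ).ne' (gaussian_pos μ₂ x hσ).ne' (add_pos_of_pos_of_nonneg ha hb).ne',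
    score_gaussian μ₁ x hσ, score_gaussian μ₂ x hσ]
  calc gaussian μ₁ σ x * (b * ((μ₁ - x) / σ ^ 2 - (μ₂ - x) / σ ^ 2) / (a + b)) ^ 2
      = (μ₁ - μ₂) ^ 2 / w / σ ^ 4 * (a * (b / (a + b)) ^ 2) := by
        simp only [a]
        field_simp
        ring
    _ ≤ (μ₁ - μ₂) ^ 2 / w / σ ^ 4 * (√(a * b) / 2) := by
        gcongr
        exact mul_sq_div_add_le_sqrt_mul ha.le hb
    _ = _ := by
        rw [hsqrt, sqrt_gaussian_mul_gaussian μ₁ μ₂ x hσ]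
        ring

lemma fisherDiv_gaussian_mixture_le (hσ : 0 < σ) (hw0 : 0 < w) (hw1 : w ≤ 1) :
    fisherDiv (gaussian μ₁ σ) (fun y => w * gaussian μ₁ σ y + (1 - w) * gaussian μ₂ σ y) ≤
      (μ₁ - μ₂) ^ 2 * √(w * (1 - w)) / (2 * w) / σ ^ 4 * exp (-(μ₂ - μ₁) ^ 2 / (8 * σ ^ 2)) := by
  calc fisherDiv (gaussian μ₁ σ) _
      ≤ ∫ x, (μ₁ - μ₂) ^ 2 * √(w * (1 - w)) / (2 * w) / σ ^ 4 *
          exp (-(μ₂ - μ₁) ^ 2 / (8 * σ ^ 2)) * gaussian ((μ₁ + μ₂) / 2) σ x :=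
        integral_mono_of_nonneg
          (ae_of_all _ fun x => mul_nonneg (gaussian_pos μ₁ x hσ).le (sq_nonneg _))
          ((integrable_gaussian _ hσ).const_mul _)
          (ae_of_all _ fun x => gaussian_mul_sq_score_sub_mixture_le x hσ hw0 hw1)
    _ = _ := by rw [integral_const_mul, integral_gaussian_eq_one _ hσ, mul_one]

end Mixture

lemma tendsto_exp_neg_div_sq_div_pow_four {c : ℝ} (hc : 0 < c) :
    Tendsto (fun σ : ℝ => exp (-c / σ ^ 2) / σ ^ 4) (𝓝[>] 0) (𝓝 0) := by
  have h := (tendsto_rpow_mul_exp_neg_mul_atTop_nhds_zero 2 c hc).comp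
    ((tendsto_pow_atTop two_ne_zero).comp tendsto_inv_nhdsGT_zero)
  refine h.congr fun σ => ?_
  simp only [Function.comp_apply, rpow_two]
  field_simp

/-- blindness of score matching to isolated components in the model,
small-variance limit: `J(q_σ ‖ p_σ) → 0` as `σ → 0⁺`. -/
theorem fisher_blind_to_isolated_components_small_variance (μ₁ μ₂ w : ℝ)
    (hμ : μ₁ < μ₂) (hw : w ∈ Set.Ioo (0 : ℝ) 1) :
    Tendsto
      (fun σ => fisherDiv (fun y => gaussian μ₁ σ y)
        (fun y => w * gaussian μ₁ σ y + (1 - w) * gaussian μ₂ σ y))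
      (nhdsWithin 0 (Set.Ioi 0)) (nhds 0) := by
  have hc : 0 < (μ₂ - μ₁) ^ 2 / 8 := by have := sub_pos.2 hμ; positivity
  have hbound := (tendsto_exp_neg_div_sq_div_pow_four hc).const_mul
    ((μ₁ - μ₂) ^ 2 * √(w * (1 - w)) / (2 * w))
  rw [mul_zero] at hbound
  refine squeeze_zero' (eventually_nhdsWithin_of_forall fun σ hσ => ?_)
    (eventually_nhdsWithin_of_forall fun σ hσ => ?_) hbound
  · exact fisherDiv_nonneg _ fun x => (gaussian_pos μ₁ x hσ).le
  · convert fisherDiv_gaussian_mixture_le hσ hw.1 hw.2.le using 1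
    ring_nf
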